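/- arXiv:2007.13782 — 2 statements merged into one kernel-verified Lean document; each statement's English description precedes it below -/
import Mathlib

section
/- If T is a consistent tree system in a connected graph G and e is an edge contained in every tree of T, then the collection of contracted trees {T/e : T ∈ T}, with the trees rooted at the two endpoints of e identified, is a consistent tree system in the contracted graph G/e. -/
open SimpleGraph

variable {V : Type*}

/-- Total weight of a walk: sum of the weights of its edges. -/
def walkWeight {G : SimpleGraph V} (w : Sym2 V → ℝ) {u v : V} (p : G.Walk u v) : ℝ :=
  (p.edges.map w).sum

/-- A path system: a choice of a simple path between every (ordered) pair of vertices. -/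
def IsPathSystem (G : SimpleGraph V) (P : ∀ u v : V, G.Walk u v) : Prop :=
  ∀ u v, (P u v).IsPath

/-- Consistency: any subpath of a chosen path is itself a chosen path. -/
def Consistent (G : SimpleGraph V) (P : ∀ u v : V, G.Walk u v) : Prop :=
  ∀ (u v x y : V) (r : G.Walk u x) (q : G.Walk x y) (s : G.Walk y v),
    P u v = r.append (q.append s) → q = P x y

/-- `w` induces `P`: every chosen path is a `w`-shortest path between its endpoints. -/
def Induces (G : SimpleGraph V) (w : Sym2 V → ℝ) (P : ∀ u v : V, G.Walk u v) : Prop :=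
  ∀ (u v : V) (Q : G.Walk u v), Q.IsPath → walkWeight w (P u v) ≤ walkWeight w Q

/-- `w` strictly induces `P`: every chosen path is the unique `w`-shortest path. -/
def StrictlyInduces (G : SimpleGraph V) (w : Sym2 V → ℝ) (P : ∀ u v : V, G.Walk u v) : Prop :=
  ∀ (u v : V) (Q : G.Walk u v), Q.IsPath → Q ≠ P u v →
    walkWeight w (P u v) < walkWeight w Q

/-- A graph is metrizable if every consistent path system in it is induced by a
positive edge weight function. -/
def Metrizable (G : SimpleGraph V) : Prop :=
  ∀ P : ∀ u v : V, G.Walk u v, IsPathSystem G P → Consistent G P →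
    ∃ w : Sym2 V → ℝ, (∀ e ∈ G.edgeSet, 0 < w e) ∧ Induces G w P

/-- A graph is strictly metrizable if every consistent path system in it is strictly
induced by a positive edge weight function. -/
def StrictlyMetrizable (G : SimpleGraph V) : Prop :=
  ∀ P : ∀ u v : V, G.Walk u v, IsPathSystem G P → Consistent G P →
    ∃ w : Sym2 V → ℝ, (∀ e ∈ G.edgeSet, 0 < w e) ∧ StrictlyInduces G w P

/-- A tree system: a spanning tree `T u` of `G` for every root `u`. -/
def IsTreeSystem {W : Type*} (G : SimpleGraph W) (T : W → SimpleGraph W) : Prop :=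
  ∀ u, T u ≤ G ∧ (T u).IsTree

/-- Consistency of a tree system: for all `u v`, the `uv`-path in `T u` and the
`uv`-path in `T v` coincide (as edge lists). -/
def TreeConsistent {W : Type*} (T : W → SimpleGraph W) : Prop :=
  ∀ (u v : W) (p : (T u).Walk u v) (q : (T v).Walk u v),
    p.IsPath → q.IsPath → p.edges = q.edges

/-- The projection collapsing `y` onto `x`. -/
def proj [DecidableEq V] (x y : V) (hxy : x ≠ y) (z : V) : {z : V // z ≠ y} :=
  if h : z = y then ⟨x, hxy⟩ else ⟨z, h⟩

/-- The graph obtained from `G` by contracting the edge `xy` (identifying `y` with `x`). -/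
def contract [DecidableEq V] (G : SimpleGraph V) (x y : V) (hxy : x ≠ y) :
    SimpleGraph {z : V // z ≠ y} :=
  SimpleGraph.fromRel (fun a b =>
    ∃ a' b' : V, G.Adj a' b' ∧ proj x y hxy a' = a ∧ proj x y hxy b' = b)

/-!
Contracting an edge `xy` of a tree gives a tree, and a path of the tree maps to a path of the
contraction (the tree contains `xy`, so a path through both `x` and `y` uses that edge). Hence the
`uv`-path of `T u / xy` is the image of the `uv`-path of `T u`, whose edges are those of the
`uv`-path of `T v`; this gives consistency. Persistence forces `T x = T y`: an edge `ab ≠ xy` of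
`T x` lies on its path from `x` to some `c`, which is also the `xc`-path of `T c`; since `T c`
contains `xy`, all edges of that path other than `xy` lie on the `yc`-path of `T c`, which is
the `yc`-path of `T y`.
-/

namespace SimpleGraph

variable {S : SimpleGraph V}

lemma IsAcyclic.eq_of_isPath (hS : S.IsAcyclic) {u v : V} {p q : S.Walk u v} (hp : p.IsPath)
    (hq : q.IsPath) : p = q :=
  Subtype.mk.inj <| hS.subsingleton_path u v |>.elim ⟨p, hp⟩ ⟨q, hq⟩

lemma IsAcyclic.mem_edges_of_adj_of_mem_support (hS : S.IsAcyclic) {a b u v : V} (h : S.Adj a b)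
    {p : S.Walk u v} (hp : p.IsPath) (ha : a ∈ p.support) (hb : b ∈ p.support) :
    s(a, b) ∈ p.edges := by
  classical
  have hpa := hp.takeUntil ha
  have hpb := hp.takeUntil hb
  by_cases hab : a ∈ (p.takeUntil b hb).support
  · refine p.edges_takeUntil_subset_edges hb ?_
    simp [hS.path_concat hpa hpb h hab]
  · have hba := hS.mem_support_of_ne_mem_support_of_adj_of_isPath hpa hpb h hab
    refine p.edges_takeUntil_subset_edges ha ?_
    simp [hS.path_concat hpb hpa h.symm hba, Sym2.eq_swap]

lemma IsAcyclic.edges_subset_cons_edges (hS : S.IsAcyclic) {u v w : V} (h : S.Adj u v)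
    {p : S.Walk u w} {q : S.Walk v w} (hp : p.IsPath) (hq : q.IsPath) :
    p.edges ⊆ s(u, v) :: q.edges := by
  classical
  by_cases hu : u ∈ q.support
  · rw [hS.eq_of_isPath hp (hq.dropUntil hu)]
    exact fun e he => List.mem_cons_of_mem _ (q.edges_dropUntil_subset_edges hu he)
  · rw [hS.eq_of_isPath hp (hq.cons hu (h := h)), Walk.edges_cons]
    exact List.Subset.refl _

lemma IsTree.exists_isPath_mem_edges (hS : S.IsTree) {a b : V} (h : S.Adj a b) (r : V) :
    ∃ (c : V) (p : S.Walk r c), p.IsPath ∧ s(a, b) ∈ p.edges := by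
  obtain ⟨p, hp, -⟩ := hS.existsUnique_path r a
  by_cases hb : b ∈ p.support
  · exact ⟨a, p, hp, hS.isAcyclic.mem_edges_of_adj_of_mem_support h hp p.end_mem_support hb⟩
  · exact ⟨b, p.concat h, hp.concat hb h, by simp [Walk.edges_concat]⟩

end SimpleGraph

open SimpleGraph

lemma TreeConsistent.le_of_forall_adj {T : V → SimpleGraph V} (hT : ∀ u, (T u).IsTree)
    (hcons : TreeConsistent T) {x y : V} (hpers : ∀ u, (T u).Adj x y) : T x ≤ T y := by
  intro a b hab
  by_cases he : s(a, b) = s(x, y)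
  · rw [← mem_edgeSet, he]
    exact hpers y
  obtain ⟨c, p, hp, hab_p⟩ := (hT x).exists_isPath_mem_edges hab x
  obtain ⟨q, hq, -⟩ := (hT c).existsUnique_path x c
  obtain ⟨r, hr, -⟩ := (hT c).existsUnique_path y c
  obtain ⟨r', hr', -⟩ := (hT y).existsUnique_path y c
  have hab_q : s(a, b) ∈ s(x, y) :: r.edges :=
    (hT c).isAcyclic.edges_subset_cons_edges (hpers c) hq hr (hcons x c p q hp hq ▸ hab_p)
  have hab_r : s(a, b) ∈ r'.edges :=
    hcons y c r' r hr' hr ▸ (List.mem_cons.mp hab_q).resolve_left he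
  exact r'.adj_of_mem_edges hab_r

section Contraction

variable [DecidableEq V] {x y : V} {hxy : x ≠ y} {S G : SimpleGraph V}

local notation "π" => proj x y hxy

lemma proj_eq_proj_iff {a b : V} : π a = π b ↔ a = b ∨ s(a, b) = s(x, y) := by
  unfold proj
  split_ifs <;> grind [Subtype.ext_iff, Sym2.eq_iff]

lemma proj_val (z : {z : V // z ≠ y}) : π z.val = z := by
  simp [proj, z.prop]

lemma contract_adj {a b : {z : V // z ≠ y}} :
    (contract S x y hxy).Adj a b ↔ a ≠ b ∧ ∃ a' b', S.Adj a' b' ∧ π a' = a ∧ π b' = b := by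
  simp only [contract, fromRel_adj]
  constructor
  · rintro ⟨hne, ⟨a', b', h, rfl, rfl⟩ | ⟨a', b', h, rfl, rfl⟩⟩
    exacts [⟨hne, a', b', h, rfl, rfl⟩, ⟨hne, b', a', h.symm, rfl, rfl⟩]
  · rintro ⟨hne, h⟩
    exact ⟨hne, Or.inl h⟩

lemma contract_adj_proj {a b : V} (h : S.Adj a b) (he : s(a, b) ≠ s(x, y)) :
    (contract S x y hxy).Adj (π a) (π b) :=
  contract_adj.mpr ⟨fun hab => (proj_eq_proj_iff.mp hab).elim h.ne he, a, b, h, rfl, rfl⟩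

lemma contract_mono (h : S ≤ G) : contract S x y hxy ≤ contract G x y hxy := fun _ _ hab =>
  let ⟨hne, a', b', h', ha, hb⟩ := contract_adj.mp hab
  contract_adj.mpr ⟨hne, a', b', h h', ha, hb⟩

variable (hxy) in
def projWalk : ∀ {a b : V}, S.Walk a b → (contract S x y hxy).Walk (π a) (π b)
  | _, _, .nil => .nil
  | _, _, @Walk.cons _ _ a c _ h p =>
    if he : s(a, c) = s(x, y) then (projWalk p).copy (proj_eq_proj_iff.mpr (Or.inr he)).symm rfl
    else .cons (contract_adj_proj h he) (projWalk p)

lemma edges_projWalk {a b : V} (p : S.Walk a b) :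
    (projWalk hxy p).edges =
      p.edges.filterMap fun e => if e = s(x, y) then none else some (e.map π) := by
  induction p with
  | nil => rfl
  | cons h p ih =>
    simp only [projWalk]
    split_ifs with he <;> simp [ih, he]

lemma support_projWalk_subset {a b : V} (p : S.Walk a b) :
    (projWalk hxy p).support ⊆ p.support.map π := by
  induction p with
  | nil => simp [projWalk]
  | cons h p ih =>
    simp only [projWalk]
    split_ifs with he
    · rw [Walk.support_copy, Walk.support_cons, List.map_cons]
      exact List.subset_cons_of_subset _ ih
    · rw [Walk.support_cons, Walk.support_cons, List.map_cons]
      exact List.cons_subset_cons _ ih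

lemma isPath_projWalk {a b : V} {p : S.Walk a b} (hp : p.IsPath)
    (hxy_mem : x ∈ p.support → y ∈ p.support → s(x, y) ∈ p.edges) : (projWalk hxy p).IsPath := by
  induction p with
  | nil => exact .nil
  | @cons a c b h p ih =>
    rw [Walk.cons_isPath_iff] at hp
    simp only [projWalk]
    split_ifs with he
    · refine (Walk.isPath_copy _ _ _).mpr (ih hp.1 fun hx hy => ?_)
      rcases Sym2.mem_iff.mp (he ▸ Sym2.mem_mk_left a c) with rfl | rfl
      exacts [absurd hx hp.2, absurd hy hp.2]
    have hxy_mem' : x ∈ (Walk.cons h p).support → y ∈ (Walk.cons h p).support →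
        s(x, y) ∈ p.edges := fun hx hy =>
      (List.mem_cons.mp (hxy_mem hx hy)).resolve_left (Ne.symm he)
    refine Walk.IsPath.cons (ih hp.1 fun hx hy => hxy_mem' (by simp [hx]) (by simp [hy])) ?_
    intro ha
    obtain ⟨w, hw, hwa⟩ := List.mem_map.mp (support_projWalk_subset p ha)
    rcases proj_eq_proj_iff.mp hwa with rfl | hwa
    · exact hp.2 hw
    have hwa_mem : s(w, a) ∈ p.edges := by
      rw [hwa]
      rcases Sym2.eq_iff.mp hwa with ⟨rfl, rfl⟩ | ⟨rfl, rfl⟩ <;>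
        exact hxy_mem' (by simp [hw]) (by simp [hw])
    exact hp.2 (p.snd_mem_support_of_mem_edges hwa_mem)

lemma reachable_proj_val (h : S.Adj x y) (a : V) : S.Reachable (π a).val a := by
  unfold proj
  split_ifs with ha
  · exact ha ▸ h.reachable
  · rfl

lemma reachable_of_contract (h : S.Adj x y) {a b : {z : V // z ≠ y}}
    (hab : (contract S x y hxy).Reachable a b) : S.Reachable a.val b.val := by
  obtain ⟨p⟩ := hab
  induction p with
  | nil => rfl
  | cons had _ ih =>
    obtain ⟨-, a', b', h', rfl, rfl⟩ := contract_adj.mp had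
    exact (reachable_proj_val h a').trans <|
      h'.reachable.trans <| (reachable_proj_val h b').symm.trans ih

lemma contract_deleteEdges_le (a b : V) :
    (contract S x y hxy).deleteEdges {s(π a, π b)} ≤
      contract (S.deleteEdges {s(a, b)}) x y hxy := by
  intro c d hcd
  rw [deleteEdges_adj, Set.mem_singleton_iff] at hcd
  obtain ⟨hne, c', d', h, rfl, rfl⟩ := contract_adj.mp hcd.1
  refine contract_adj.mpr ⟨hne, c', d', (deleteEdges_adj ..).mpr ⟨h, fun he => hcd.2 ?_⟩, rfl, rfl⟩
  simpa using congrArg (Sym2.map π) (Set.mem_singleton_iff.mp he)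

lemma isAcyclic_contract (hS : S.IsAcyclic) (h : S.Adj x y) :
    (contract S x y hxy).IsAcyclic := by
  refine isAcyclic_iff_forall_adj_isBridge.mpr fun c d hcd => isBridge_iff.mpr fun hreach => ?_
  obtain ⟨hne, a, b, hab, rfl, rfl⟩ := contract_adj.mp hcd
  have h' : (S.deleteEdges {s(a, b)}).Adj x y := by
    refine (deleteEdges_adj ..).mpr ⟨h, fun he => hne (proj_eq_proj_iff.mpr (Or.inr ?_))⟩
    exact (Set.mem_singleton_iff.mp he).symm
  have hab' := reachable_of_contract h' (hreach.mono (contract_deleteEdges_le a b))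
  exact isBridge_iff.mp (isAcyclic_iff_forall_adj_isBridge.mp hS hab) <|
    (reachable_proj_val h' a).symm.trans <| hab'.trans <| reachable_proj_val h' b

lemma connected_contract (hS : S.Connected) : (contract S x y hxy).Connected := by
  have : Nonempty {z : V // z ≠ y} := ⟨⟨x, hxy⟩⟩
  refine ⟨fun a b => ?_⟩
  obtain ⟨p⟩ := hS.preconnected a.val b.val
  simpa only [proj_val] using (projWalk hxy p).reachable

lemma isTree_contract (hS : S.IsTree) (h : S.Adj x y) : (contract S x y hxy).IsTree :=
  ⟨connected_contract hS.connected, isAcyclic_contract hS.isAcyclic h⟩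

lemma edges_eq_edges_projWalk_of_isPath (hS : S.IsTree) (h : S.Adj x y) {a b : {z : V // z ≠ y}}
    {p : (contract S x y hxy).Walk a b} (hp : p.IsPath) {q : S.Walk a.val b.val}
    (hq : q.IsPath) : p.edges = (projWalk hxy q).edges := by
  have hq' := isPath_projWalk (hxy := hxy) hq (hS.isAcyclic.mem_edges_of_adj_of_mem_support h hq)
  rw [(isTree_contract hS h).isAcyclic.eq_of_isPath hp
    ((Walk.isPath_copy _ (proj_val a) (proj_val b)).mpr hq'), Walk.edges_copy]

lemma TreeConsistent.contract {T : V → SimpleGraph V} (hT : ∀ u, (T u).IsTree)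
    (hcons : TreeConsistent T) (hpers : ∀ u, (T u).Adj x y) :
    TreeConsistent fun u : {z : V // z ≠ y} => contract (T u.val) x y hxy := by
  intro u v p q hp hq
  obtain ⟨P, hP, -⟩ := (hT u.val).existsUnique_path u.val v.val
  obtain ⟨Q, hQ, -⟩ := (hT v.val).existsUnique_path u.val v.val
  rw [edges_eq_edges_projWalk_of_isPath (hT u) (hpers u) hp hP,
    edges_eq_edges_projWalk_of_isPath (hT v) (hpers v) hq hQ,
    edges_projWalk, edges_projWalk, hcons _ _ P Q hP hQ]

end Contraction

theorem contract_persistent_edge_tree_system_general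
    [DecidableEq V] (G : SimpleGraph V)
    (T : V → SimpleGraph V) (hT : IsTreeSystem G T) (hTcons : TreeConsistent T)
    (x y : V) (hadj : G.Adj x y) (hpers : ∀ u, (T u).Adj x y) :
    IsTreeSystem (contract G x y hadj.ne) (fun u => contract (T u.val) x y hadj.ne) ∧
    TreeConsistent (fun u : {z : V // z ≠ y} => contract (T u.val) x y hadj.ne) ∧
    contract (T x) x y hadj.ne = contract (T y) x y hadj.ne := by
  have htree : ∀ u, (T u).IsTree := fun u => (hT u).2
  refine ⟨fun u => ⟨contract_mono (hT u.val).1, isTree_contract (htree u.val) (hpers u.val)⟩,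
    hTcons.contract htree hpers, ?_⟩
  rw [le_antisymm (hTcons.le_of_forall_adj htree hpers)
    (hTcons.le_of_forall_adj htree fun u => (hpers u).symm)]

/-- contracting a persistent edge of a consistent tree system yields a
consistent tree system of the contracted graph (the trees rooted at the two endpoints
of the contracted edge being identified). -/
theorem contract_persistent_edge_tree_system
    [Fintype V] [DecidableEq V] (G : SimpleGraph V) (hconn : G.Connected)
    (T : V → SimpleGraph V) (hT : IsTreeSystem G T) (hTcons : TreeConsistent T)
    (x y : V) (hadj : G.Adj x y) (hpers : ∀ u, (T u).Adj x y) :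
    IsTreeSystem (contract G x y hadj.ne) (fun u => contract (T u.val) x y hadj.ne) ∧
    TreeConsistent (fun u : {z : V // z ≠ y} => contract (T u.val) x y hadj.ne) ∧
    contract (T x) x y hadj.ne = contract (T y) x y hadj.ne :=
  contract_persistent_edge_tree_system_general G T hT hTcons x y hadj hpers
end

section
/- A function f from the vertices of the n-cycle C_n to its edges defines (as a tree system T_v = C_n minus the edge f(v)) a consistent path system if and only if for every pair of vertices x, y, either f(x) = f(y) or the vertex x together with the edge f(x) separate y from f(y) on the cycle. -/
open SimpleGraph

variable {V : Type*}

/-- `x` together with the edge `ex` separate `y` from the edge `ey` on the cycle: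
after deleting the edge `ex`, every walk from `y` to an endpoint of `ey`
passes through `x`. -/
def SeparatesCycle (n : ℕ) (x : Fin n) (ex : Sym2 (Fin n)) (y : Fin n)
    (ey : Sym2 (Fin n)) : Prop :=
  ∀ z ∈ ey, ∀ p : ((cycleGraph n).deleteEdges {ex}).Walk y z, x ∈ p.support


/-!
Deleting the edge `s(a, a + 1)` from `C_n` leaves a path, linearly ordered by `v ↦ v - (a + 1)`;
so every `T_v` is a tree, and tree consistency says exactly that `f v` never lies on the
`uv`-path of `T_u`. If `x` and `f x` separate `y` from `f y`, such an occurrence is impossible: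
the part of the path beyond `f y` would join `y` to an endpoint of `f y` avoiding `x`.
Conversely, if separation fails in the linear order of `T_x`, then either `f y` lies between `x`
and `y`, or `y` lies between `x` and the far endpoint `w` of `f y`. In the second case the
`yw`-path of `T_x` carries `f y`, so consistency for `(w, y)` forces `f w` onto it, hence onto the
`xw`-path of `T_x`, against consistency for `(x, w)`.
-/

open Function

theorem Fin.val_sub_eq_one_iff {n : ℕ} (hn : 1 < n) {u v : Fin n} :
    (v - u).val = 1 ↔ v.val = u.val + 1 ∨ (u.val + 1 = n ∧ v.val = 0) := by
  have := u.isLt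
  rcases le_or_gt u v with h | h
  · rw [Fin.sub_val_of_le h]
    have := Fin.le_def.mp h
    omega
  · rw [Fin.coe_sub_iff_lt.mpr h]
    have := Fin.lt_def.mp h
    omega

namespace SimpleGraph

variable {G : SimpleGraph V}

section Potential

variable {φ : V → ℕ}

theorem Walk.exists_mem_darts_of_le_of_lt (hφ : ∀ ⦃u v⦄, G.Adj u v → φ v ≤ φ u + 1)
    {u v : V} (p : G.Walk u v) {k : ℕ} (hu : φ u ≤ k) (hv : k < φ v) :
    ∃ d ∈ p.darts, φ d.fst = k ∧ φ d.snd = k + 1 := by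
  obtain ⟨d, hd, hfst, hsnd⟩ := p.exists_boundary_dart {z | φ z ≤ k} hu (by simpa using hv)
  have := hφ d.adj
  simp only [Set.mem_ofPred_eq, not_le] at hfst hsnd
  exact ⟨d, hd, by omega, by omega⟩

theorem Walk.mem_support_of_between (hφ : ∀ ⦃u v⦄, G.Adj u v → φ v ≤ φ u + 1)
    (hinj : Injective φ) {u v x : V} (p : G.Walk u v)
    (hx : φ u ≤ φ x ∧ φ x ≤ φ v ∨ φ v ≤ φ x ∧ φ x ≤ φ u) : x ∈ p.support := by
  wlog h : φ u ≤ φ x ∧ φ x ≤ φ v generalizing u v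
  · simpa using this p.reverse hx.symm (hx.resolve_left h)
  rcases h.2.eq_or_lt with hxv | hxv
  · rw [hinj hxv]; exact p.end_mem_support
  obtain ⟨d, hd, hfst, -⟩ := p.exists_mem_darts_of_le_of_lt hφ h.1 hxv
  exact hinj hfst ▸ p.dart_fst_mem_support_of_mem_darts hd

theorem Walk.mk_mem_edges_of_between (hφ : ∀ ⦃u v⦄, G.Adj u v → φ v ≤ φ u + 1)
    (hinj : Injective φ) {u v b b' : V} (p : G.Walk u v) (hb : φ b' = φ b + 1)
    (h : φ u ≤ φ b ∧ φ b' ≤ φ v ∨ φ v ≤ φ b ∧ φ b' ≤ φ u) : s(b, b') ∈ p.edges := by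
  wlog h' : φ u ≤ φ b ∧ φ b' ≤ φ v generalizing u v
  · simpa using this p.reverse h.symm (h.resolve_left h')
  obtain ⟨d, hd, hfst, hsnd⟩ := p.exists_mem_darts_of_le_of_lt hφ h'.1 (by omega)
  obtain ⟨⟨c, c'⟩, hcc'⟩ := d
  obtain rfl : c = b := hinj hfst
  obtain rfl : c' = b' := hinj (hsnd.trans hb.symm)
  exact List.mem_map_of_mem hd

theorem isAcyclic_of_injective_of_adj_le (hφ : ∀ ⦃u v⦄, G.Adj u v → φ v ≤ φ u + 1)
    (hinj : Injective φ) : G.IsAcyclic := by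
  rw [isAcyclic_iff_forall_adj_isBridge]
  intro v w hvw
  wlog h : φ w = φ v + 1 generalizing v w
  · have hne : φ v ≠ φ w := fun h' => hvw.ne (hinj h')
    rw [Sym2.eq_swap]
    exact this hvw.symm (by have := hφ hvw; have := hφ hvw.symm; omega)
  rw [isBridge_iff]
  rintro ⟨p⟩
  have hmem :=
    p.mk_mem_edges_of_between (fun _ _ hadj => hφ (G.deleteEdges_le _ hadj)) hinj h (by omega)
  simpa using p.edges_subset_edgeSet hmem

theorem exists_eq_mk_of_mem_edgeSet (hφ : ∀ ⦃u v⦄, G.Adj u v → φ v ≤ φ u + 1)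
    (hinj : Injective φ) {e : Sym2 V} (he : e ∈ G.edgeSet) :
    ∃ b b', e = s(b, b') ∧ φ b' = φ b + 1 := by
  induction e using Sym2.ind with
  | _ c c' =>
  rw [mem_edgeSet] at he
  have := hφ he
  have := hφ (G.adj_symm he)
  have := hinj.ne (G.ne_of_adj he)
  rcases (show φ c' = φ c + 1 ∨ φ c = φ c' + 1 by omega) with h | h
  · exact ⟨c, c', rfl, h⟩
  · exact ⟨c', c, Sym2.eq_swap, h⟩

end Potential

theorem isTree_pathGraph (n : ℕ) [NeZero n] : (pathGraph n).IsTree :=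
  ⟨⟨pathGraph_preconnected n⟩, isAcyclic_of_injective_of_adj_le (φ := Fin.val)
    (fun _ _ h => by rw [pathGraph_adj] at h; omega) Fin.val_injective⟩

section TreeSystem

variable {f : V → Sym2 V}

theorem Walk.IsPath.exists_walk_notMem_support [DecidableEq V] {u v : V} {p : G.Walk u v}
    (hp : p.IsPath) {e : Sym2 V} (he : e ∈ p.edges) :
    ∃ z ∈ e, ∃ q : G.Walk v z, u ∉ q.support := by
  induction e using Sym2.ind with
  | _ a b =>
  have hab : a ≠ b := (p.adj_of_mem_edges he).ne
  obtain ⟨z, hz, hzu, hzp⟩ : ∃ z ∈ s(a, b), z ≠ u ∧ z ∈ p.reverse.support := by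
    by_cases hau : a = u
    · exact ⟨b, Sym2.mem_mk_right a b, hau ▸ hab.symm, by
        simpa using p.snd_mem_support_of_mem_edges he⟩
    · exact ⟨a, Sym2.mem_mk_left a b, hau, by
        simpa using p.fst_mem_support_of_mem_edges he⟩
  exact ⟨z, hz, p.reverse.takeUntil z hzp,
    Walk.endpoint_notMem_support_takeUntil hp.reverse hzp hzu.symm⟩

theorem Walk.mem_edgeSet_deleteEdges_of_mem_edges {e e' d : Sym2 V} {u v : V}
    (p : (G.deleteEdges {e}).Walk u v) (hd : d ∈ p.edges) (hde' : d ≠ e') :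
    d ∈ (G.deleteEdges {e'}).edgeSet := by
  have := p.edges_subset_edgeSet hd
  simp only [edgeSet_deleteEdges, Set.mem_sdiff, Set.mem_singleton_iff] at this ⊢
  exact ⟨this.1, hde'⟩

theorem Walk.edges_eq_iff_notMem_edges {e e' : Sym2 V} (h : (G.deleteEdges {e'}).IsAcyclic)
    {u v : V} {p : (G.deleteEdges {e}).Walk u v} {q : (G.deleteEdges {e'}).Walk u v}
    (hp : p.IsPath) (hq : q.IsPath) : p.edges = q.edges ↔ e' ∉ p.edges := by
  constructor
  · intro hpq he'
    have := q.edges_subset_edgeSet (hpq ▸ he')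
    rw [edgeSet_deleteEdges] at this
    exact this.2 rfl
  · intro he'
    have hsub : ∀ d ∈ p.edges, d ∈ (G.deleteEdges {e'}).edgeSet := fun d hd =>
      p.mem_edgeSet_deleteEdges_of_mem_edges hd fun hde => he' (hde ▸ hd)
    have := (h.subsingleton_path u v).elim ⟨p.transfer _ hsub, hp.transfer hsub⟩ ⟨q, hq⟩
    rw [← p.edges_transfer hsub]
    exact congrArg (fun r : (G.deleteEdges {e'}).Path u v => r.val.edges) this

theorem treeConsistent_deleteEdges_iff (hT : ∀ v, (G.deleteEdges {f v}).IsTree) :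
    TreeConsistent (fun v => G.deleteEdges {f v}) ↔
      ∀ u v (p : (G.deleteEdges {f u}).Walk u v), p.IsPath → f v ∉ p.edges := by
  constructor
  · intro h u v p hp
    obtain ⟨q, hq⟩ := ((hT v).connected.preconnected u v).exists_isPath
    exact (Walk.edges_eq_iff_notMem_edges (hT v).isAcyclic hp hq).mp (h u v p q hp hq)
  · intro h u v p q hp hq
    exact (Walk.edges_eq_iff_notMem_edges (hT v).isAcyclic hp hq).mpr (h u v p hp)

theorem notMem_edges_of_separates [DecidableEq V]
    (hsep : ∀ x y, f x = f y ∨ ∀ z ∈ f y, ∀ q : (G.deleteEdges {f x}).Walk y z, x ∈ q.support)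
    {u v : V} (p : (G.deleteEdges {f u}).Walk u v) (hp : p.IsPath) : f v ∉ p.edges := by
  intro hv
  rcases hsep u v with huv | huv
  · simpa [huv] using p.edges_subset_edgeSet hv
  · obtain ⟨z, hz, q, hq⟩ := hp.exists_walk_notMem_support hv
    exact hq (huv z hz q)

theorem notMem_edges_dropUntil [DecidableEq V]
    (hC : ∀ u v (p : (G.deleteEdges {f u}).Walk u v), p.IsPath → f v ∉ p.edges)
    {x y w : V} {p : (G.deleteEdges {f x}).Walk x w} (hp : p.IsPath) (hy : y ∈ p.support) :
    f y ∉ (p.dropUntil y hy).edges := by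
  intro hfy
  have hfw : f w ∈ (p.dropUntil y hy).edges := by
    by_contra hfw
    have hsub : ∀ d ∈ (p.dropUntil y hy).reverse.edges, d ∈ (G.deleteEdges {f w}).edgeSet :=
      fun d hd => by
        rw [Walk.edges_reverse, List.mem_reverse] at hd
        exact Walk.mem_edgeSet_deleteEdges_of_mem_edges _ hd fun hdw => hfw (hdw ▸ hd)
    refine hC w y _ ((hp.dropUntil hy).reverse.transfer hsub) ?_
    rw [Walk.edges_transfer, Walk.edges_reverse, List.mem_reverse]
    exact hfy
  exact hC x w p hp (p.edges_dropUntil_subset_edges hy hfw)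

theorem separates_of_forall_notMem_edges [DecidableEq V] (hf : ∀ v, f v ∈ G.edgeSet)
    (hC : ∀ u v (p : (G.deleteEdges {f u}).Walk u v), p.IsPath → f v ∉ p.edges)
    {x y : V} (hxy : f x ≠ f y) {m : ℕ} (e : G.deleteEdges {f x} ≃g pathGraph m) :
    ∀ z ∈ f y, ∀ q : (G.deleteEdges {f x}).Walk y z, x ∈ q.support := by
  let φ : V → ℕ := fun v => e v
  have hφ : ∀ ⦃u v⦄, (G.deleteEdges {f x}).Adj u v → φ v ≤ φ u + 1 := fun u v h => by
    have := pathGraph_adj.mp (e.map_adj_iff.mpr h)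
    simp only [φ]
    omega
  have hinj : Injective φ := Fin.val_injective.comp e.injective
  have hpath : ∀ u v, ∃ p : (G.deleteEdges {f x}).Walk u v, p.IsPath := fun u v =>
    ((e.preconnected_iff.mpr (pathGraph_preconnected m)) u v).exists_isPath
  have hfy : f y ∈ (G.deleteEdges {f x}).edgeSet := by
    rw [edgeSet_deleteEdges]
    exact ⟨hf y, hxy.symm⟩
  obtain ⟨b, b', hb, hbb'⟩ := exists_eq_mk_of_mem_edgeSet hφ hinj hfy
  have hφxy : φ x ≠ φ y := fun h => hxy (congrArg f (hinj h))
  have not_between : ¬ (φ x ≤ φ b ∧ φ b' ≤ φ y ∨ φ y ≤ φ b ∧ φ b' ≤ φ x) := fun h => by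
    obtain ⟨p, hp⟩ := hpath x y
    exact hC x y p hp (hb ▸ p.mk_mem_edges_of_between hφ hinj hbb' h)
  have not_beyond : ∀ w, (φ x ≤ φ y ∧ φ y ≤ φ w ∨ φ w ≤ φ y ∧ φ y ≤ φ x) →
      ¬ (φ y ≤ φ b ∧ φ b' ≤ φ w ∨ φ w ≤ φ b ∧ φ b' ≤ φ y) := fun w hyw hbw => by
    obtain ⟨p, hp⟩ := hpath x w
    have hy := p.mem_support_of_between hφ hinj hyw
    exact notMem_edges_dropUntil hC hp hy
      (hb ▸ (p.dropUntil y hy).mk_mem_edges_of_between hφ hinj hbb' hbw)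
  have := not_beyond b
  have := not_beyond b'
  intro z hz q
  -- the order types of `x`, `y`, `f y` left over are exactly those in which `x` separates
  apply q.mem_support_of_between hφ hinj
  rw [hb, Sym2.mem_iff] at hz
  rcases hz with rfl | rfl <;> omega

end TreeSystem

section Cycle

variable {n : ℕ} [NeZero n]

theorem exists_eq_mk_add_one_of_mem_edgeSet_cycleGraph {e : Sym2 (Fin n)}
    (he : e ∈ (cycleGraph n).edgeSet) : ∃ a, e = s(a, a + 1) := by
  induction e using Sym2.ind with
  | _ u v =>
  have key : ∀ u v : Fin n, (v - u).val = 1 → v = u + 1 := fun u v h => by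
    rw [← sub_eq_iff_eq_add']
    ext
    rw [h, Fin.val_one', Nat.mod_eq_of_lt (by omega)]
  rcases cycleGraph_adj'.mp he with h | h
  · exact ⟨v, by rw [key v u h, Sym2.eq_swap]⟩
  · exact ⟨u, by rw [key u v h]⟩

theorem pathGraph_eq_deleteEdges_cycleGraph (hn : 3 ≤ n) :
    pathGraph n = (cycleGraph n).deleteEdges {s(-1, 0)} := by
  have hneg : ((-1 : Fin n)).val = n - 1 := by
    rw [Fin.val_neg', Fin.val_one', Nat.mod_eq_of_lt (by omega : 1 < n),
      Nat.mod_eq_of_lt (by omega)]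
  ext u v
  simp only [pathGraph_adj, deleteEdges_adj, cycleGraph_adj',
    Fin.val_sub_eq_one_iff (by omega : 1 < n), Set.mem_singleton_iff, Sym2.eq_iff, Fin.ext_iff,
    hneg, Fin.val_zero]
  omega

def cycleGraphDeleteEdgesIso (hn : 3 ≤ n) (a : Fin n) :
    (cycleGraph n).deleteEdges {s(a, a + 1)} ≃g pathGraph n where
  toEquiv := Equiv.subRight (a + 1)
  map_rel_iff' {u v} := by
    have hcut : s(u - (a + 1), v - (a + 1)) = s(-1, 0) ↔ s(u, v) = s(a, a + 1) := by
      rw [← (Sym2.map.injective (sub_left_injective (b := a + 1))).eq_iff (a := s(u, v))]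
      simp [sub_add_eq_sub_sub]
    rw [pathGraph_eq_deleteEdges_cycleGraph hn]
    simp only [Equiv.subRight_apply, deleteEdges_adj, cycleGraph_adj', sub_sub_sub_cancel_right,
      Set.mem_singleton_iff, hcut]

end Cycle

end SimpleGraph

/-- a map `f` from vertices of `C_n` to its edges defines (via
`T v = C_n - f v`) a consistent path system iff for all `x y` either `f x = f y`
or `x` and `f x` separate `y` from `f y`. -/
theorem cycle_crossing_characterization
    (n : ℕ) (hn : 3 ≤ n) (f : Fin n → Sym2 (Fin n))
    (hf : ∀ v, f v ∈ (cycleGraph n).edgeSet) :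
    TreeConsistent (fun v => (cycleGraph n).deleteEdges {f v}) ↔
      ∀ x y : Fin n, f x = f y ∨ SeparatesCycle n x (f x) y (f y) := by
  have : NeZero n := ⟨by omega⟩
  have iso : ∀ v, Nonempty ((cycleGraph n).deleteEdges {f v} ≃g pathGraph n) := fun v => by
    obtain ⟨a, ha⟩ := exists_eq_mk_add_one_of_mem_edgeSet_cycleGraph (hf v)
    rw [ha]
    exact ⟨cycleGraphDeleteEdgesIso hn a⟩
  have htree : ∀ v, ((cycleGraph n).deleteEdges {f v}).IsTree := fun v =>
    (iso v).some.isTree_iff.mpr (isTree_pathGraph n)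
  rw [treeConsistent_deleteEdges_iff htree]
  exact ⟨fun hC x y => or_iff_not_imp_left.mpr fun hxy =>
      separates_of_forall_notMem_edges hf hC hxy (iso x).some,
    fun hsep _ _ => notMem_edges_of_separates hsep⟩
end
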